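/- Delayed double-sum bound for exponentially weighted averages. Let β₁ ∈ [0,1), let a_1, a_2, … be nonnegative real numbers, let τ_max ≥ 0 be an integer, and for each t ∈ {1,…,T} let τ_t be an integer with 0 ≤ τ_t ≤ τ_max. Then Σ_{t=1}^T Σ_{s=max(t−τ_t,1)}^{t−1} (1−β₁)·Σ_{u=1}^s β₁^{s−u}·a_u ≤ τ_max·Σ_{t=1}^T a_t. -/

import Mathlib

/-!
Writing `S_s = ∑_{u ≤ s} β^{s-u} a_u`, the recursion `S_{s+1} = β S_s + a_{s+1}` makes
`∑_{s ≤ N} (1 - β) S_s = ∑_{u ≤ N} a_u - β S_N` telescope, so the averages have total mass at most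
`∑ a`. Each index `s` lies in the delay window `[t - τ_t, t - 1]` of at most `τ_max` times `t`
(namely `t ∈ [s + 1, s + τ_max]`), so exchanging the two outer sums costs a factor `τ_max`.
-/

open Finset

section Window

variable {M : Type*} [AddCommMonoid M] [PartialOrder M] [IsOrderedAddMonoid M]

theorem card_filter_mem_delay_window_le {T τmax : ℕ} {τ : ℕ → ℕ}
    (hτ : ∀ t ∈ Icc 1 T, τ t ≤ τmax) (s : ℕ) :
    #{t ∈ Icc 1 T | s ∈ Icc (max (t - τ t) 1) (t - 1)} ≤ τmax := by
  have hsub : {t ∈ Icc 1 T | s ∈ Icc (max (t - τ t) 1) (t - 1)} ⊆ Icc (s + 1) (s + τmax) := by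
    intro t ht
    simp only [mem_filter, mem_Icc, max_le_iff] at ht ⊢
    have := hτ t (mem_Icc.2 ht.1)
    omega
  calc _ ≤ #(Icc (s + 1) (s + τmax)) := card_le_card hsub
    _ = τmax := by rw [Nat.card_Icc]; omega

theorem sum_sum_delay_window_le_nsmul {f : ℕ → M} (hf : ∀ s, 0 ≤ f s) {T τmax : ℕ}
    {τ : ℕ → ℕ} (hτ : ∀ t ∈ Icc 1 T, τ t ≤ τmax) :
    ∑ t ∈ Icc 1 T, ∑ s ∈ Icc (max (t - τ t) 1) (t - 1), f s ≤ τmax • ∑ s ∈ Icc 1 T, f s := by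
  rw [sum_comm' (t' := Icc 1 T)
    (s' := fun s => {t ∈ Icc 1 T | s ∈ Icc (max (t - τ t) 1) (t - 1)})
    (fun t s => by simp only [mem_filter, mem_Icc, max_le_iff]; omega), smul_sum]
  gcongr with s
  rw [sum_const]
  exact nsmul_le_nsmul_left (hf s) (card_filter_mem_delay_window_le hτ s)

end Window

section ExpWeightedSum

variable {R : Type*}

def expWeightedSum [CommSemiring R] (β : R) (a : ℕ → R) (s : ℕ) : R :=
  ∑ u ∈ Icc 1 s, β ^ (s - u) * a u

theorem expWeightedSum_succ [CommSemiring R] (β : R) (a : ℕ → R) (s : ℕ) :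
    expWeightedSum β a (s + 1) = β * expWeightedSum β a s + a (s + 1) := by
  rw [expWeightedSum, sum_Icc_succ_top (by omega), Nat.sub_self, pow_zero, one_mul,
    expWeightedSum, mul_sum]
  congr 1
  refine sum_congr rfl fun u hu => ?_
  rw [Nat.sub_add_comm (mem_Icc.1 hu).2, pow_succ']
  ring

theorem sum_one_sub_mul_expWeightedSum_add [CommRing R] (β : R) (a : ℕ → R) (N : ℕ) :
    ∑ s ∈ Icc 1 N, (1 - β) * expWeightedSum β a s + β * expWeightedSum β a N =
      ∑ u ∈ Icc 1 N, a u := by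
  induction N with
  | zero => simp [expWeightedSum]
  | succ N ih =>
    rw [sum_Icc_succ_top (by omega), sum_Icc_succ_top (by omega), ← ih, expWeightedSum_succ]
    ring

variable [CommRing R] [PartialOrder R] [IsOrderedRing R] {β : R} {a : ℕ → R}

theorem expWeightedSum_nonneg (hβ : 0 ≤ β) (ha : ∀ u, 0 ≤ a u) (s : ℕ) :
    0 ≤ expWeightedSum β a s :=
  sum_nonneg fun u _ => mul_nonneg (pow_nonneg hβ _) (ha u)

theorem sum_one_sub_mul_expWeightedSum_le (hβ : 0 ≤ β) (ha : ∀ u, 0 ≤ a u) (N : ℕ) :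
    ∑ s ∈ Icc 1 N, (1 - β) * expWeightedSum β a s ≤ ∑ u ∈ Icc 1 N, a u := by
  rw [← sum_one_sub_mul_expWeightedSum_add β a N]
  exact le_add_of_nonneg_right (mul_nonneg hβ (expWeightedSum_nonneg hβ ha N))

end ExpWeightedSum

/-- **Delayed double-sum bound for exponentially weighted averages.**
For `β₁ ∈ [0,1)`, nonnegative `a_u`, and integer delays `0 ≤ τ_t ≤ τ_max`,
`∑_{t=1}^T ∑_{s=max(t−τ_t,1)}^{t−1} (1−β₁) ∑_{u=1}^s β₁^{s−u} a_u ≤ τ_max ∑_{t=1}^T a_t`. -/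
theorem delayed_double_sum_bound (β₁ : ℝ) (hβ₁ : β₁ ∈ Set.Ico (0 : ℝ) 1)
    (a : ℕ → ℝ) (ha : ∀ u, 0 ≤ a u)
    (T τmax : ℕ) (τ : ℕ → ℕ) (hτ : ∀ t ∈ Finset.Icc 1 T, τ t ≤ τmax) :
    ∑ t ∈ Finset.Icc 1 T, ∑ s ∈ Finset.Icc (max (t - τ t) 1) (t - 1),
        (1 - β₁) * ∑ u ∈ Finset.Icc 1 s, β₁ ^ (s - u) * a u
      ≤ (τmax : ℝ) * ∑ t ∈ Finset.Icc 1 T, a t := by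
  obtain ⟨hβ0, hβ1⟩ := hβ₁
  have hema : ∀ s, 0 ≤ (1 - β₁) * expWeightedSum β₁ a s := fun s =>
    mul_nonneg (by linarith) (expWeightedSum_nonneg hβ0 ha s)
  calc _ ≤ τmax • ∑ s ∈ Icc 1 T, (1 - β₁) * expWeightedSum β₁ a s :=
        sum_sum_delay_window_le_nsmul hema hτ
    _ ≤ τmax • ∑ t ∈ Icc 1 T, a t :=
        nsmul_le_nsmul_right (sum_one_sub_mul_expWeightedSum_le hβ0 ha T) τmax
    _ = _ := nsmul_eq_mul _ _
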